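/- For a smooth closed curve evolving under the LIA equation ∂X/∂t = c b, the integral of the squared curvature ∮ c² ds is conserved in time. -/

import Mathlib

open Real MeasureTheory intervalIntegral
open scoped RealInnerProductSpace

noncomputable section

/-- ℝ³ with the Euclidean norm. -/
abbrev E3 : Type := EuclideanSpace ℝ (Fin 3)

/-- Build a vector of ℝ³ from its three coordinates. -/
def v3 (x y z : ℝ) : E3 := (WithLp.equiv 2 (Fin 3 → ℝ)).symm ![x, y, z]

/-- The cross product on ℝ³. -/
def cross3 (a b : E3) : E3 :=
  (WithLp.equiv 2 (Fin 3 → ℝ)).symm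
    (crossProduct (WithLp.equiv 2 (Fin 3 → ℝ) a) (WithLp.equiv 2 (Fin 3 → ℝ) b))

/-- The curvature of a regular space curve, `c = ‖γ' × γ''‖ / ‖γ'‖³`. -/
def curv (γ : ℝ → E3) (t : ℝ) : ℝ :=
  ‖cross3 (deriv γ t) (deriv (deriv γ) t)‖ / ‖deriv γ t‖ ^ 3

/-- The unit binormal of a regular space curve, `b = (γ' × γ'') / ‖γ' × γ''‖`. -/
def binormal3 (γ : ℝ → E3) (t : ℝ) : E3 :=
  ‖cross3 (deriv γ t) (deriv (deriv γ) t)‖⁻¹ • cross3 (deriv γ t) (deriv (deriv γ) t)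

/-! ### Coordinate lemmas for `cross3` -/

lemma cross3_apply (a b : E3) (i : Fin 3) :
    cross3 a b i = ![a 1 * b 2 - a 2 * b 1, a 2 * b 0 - a 0 * b 2, a 0 * b 1 - a 1 * b 0] i := by
  simp [cross3, cross_apply]

lemma inner3 (a b : E3) : ⟪a, b⟫ = a 0 * b 0 + a 1 * b 1 + a 2 * b 2 := by
  simp [PiLp.inner_apply, Fin.sum_univ_three, RCLike.inner_apply, mul_comm]

lemma ext3 {a b : E3} (h0 : a 0 = b 0) (h1 : a 1 = b 1) (h2 : a 2 = b 2) : a = b := by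
  ext i; fin_cases i <;> assumption

lemma cross3_add_left (a b c : E3) : cross3 (a + b) c = cross3 a c + cross3 b c := by
  apply ext3 <;> simp [cross3_apply, PiLp.add_apply] <;> ring

lemma cross3_add_right (a b c : E3) : cross3 a (b + c) = cross3 a b + cross3 a c := by
  apply ext3 <;> simp [cross3_apply, PiLp.add_apply] <;> ring

lemma cross3_sub_left (a b c : E3) : cross3 (a - b) c = cross3 a c - cross3 b c := by
  apply ext3 <;> simp [cross3_apply, PiLp.sub_apply] <;> ring

lemma cross3_sub_right (a b c : E3) : cross3 a (b - c) = cross3 a b - cross3 a c := by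
  apply ext3 <;> simp [cross3_apply, PiLp.sub_apply] <;> ring

lemma cross3_smul_left (s : ℝ) (a b : E3) : cross3 (s • a) b = s • cross3 a b := by
  apply ext3 <;> simp [cross3_apply, PiLp.smul_apply] <;> ring

lemma cross3_smul_right (s : ℝ) (a b : E3) : cross3 a (s • b) = s • cross3 a b := by
  apply ext3 <;> simp [cross3_apply, PiLp.smul_apply] <;> ring

lemma cross3_self (a : E3) : cross3 a a = 0 := by
  apply ext3 <;> simp [cross3_apply] <;> ring

lemma lagrange3 (x y z w : E3) :
    ⟪cross3 x y, cross3 z w⟫ = ⟪x, z⟫ * ⟪y, w⟫ - ⟪x, w⟫ * ⟪y, z⟫ := by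
  simp only [inner3, cross3_apply, Matrix.cons_val_zero, Matrix.cons_val_one, Matrix.head_cons,
    Matrix.cons_val_two, Matrix.tail_cons]; ring

lemma triple3 (x y z : E3) : ⟪cross3 x y, z⟫ = ⟪x, cross3 y z⟫ := by
  simp only [inner3, cross3_apply, Matrix.cons_val_zero, Matrix.cons_val_one, Matrix.head_cons,
    Matrix.cons_val_two, Matrix.tail_cons]; ring

lemma inner_cross3_self_left (x y : E3) : ⟪x, cross3 x y⟫ = 0 := by
  simp only [inner3, cross3_apply, Matrix.cons_val_zero, Matrix.cons_val_one, Matrix.head_cons,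
    Matrix.cons_val_two, Matrix.tail_cons]; ring

lemma inner_cross3_self_right (x y : E3) : ⟪y, cross3 x y⟫ = 0 := by
  simp only [inner3, cross3_apply, Matrix.cons_val_zero, Matrix.cons_val_one, Matrix.head_cons,
    Matrix.cons_val_two, Matrix.tail_cons]; ring

lemma inner_cross3_right_self (x y : E3) : ⟪cross3 x y, y⟫ = 0 := by
  rw [real_inner_comm]; exact inner_cross3_self_right x y

/-! ### The key pointwise algebraic identity -/

lemma key_identity (a b c d : E3) {q r e : ℝ} (hq : q ≠ 0)
    (hqd : q = ⟪a, a⟫) (hrd : r = ⟪a, b⟫) (hed : e = ⟪b, b⟫ + ⟪a, c⟫) :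
    2 * ⟪cross3 a b, cross3 (q⁻¹ • cross3 a c - (3 * r * (q ^ 2)⁻¹) • cross3 a b) b
        + cross3 a (q⁻¹ • (cross3 b c + cross3 a d) - (6 * r * (q ^ 2)⁻¹) • cross3 a c
            + (15 * r ^ 2 * (q ^ 3)⁻¹ - 3 * e * (q ^ 2)⁻¹) • cross3 a b)⟫ * (q ^ 3)⁻¹
      = -2 * ⟪cross3 a b, d⟫ * (q ^ 3)⁻¹ + 12 * r * ⟪cross3 a b, c⟫ * (q ^ 4)⁻¹ := by
  clear hed
  simp only [cross3_add_left, cross3_add_right, cross3_sub_left, cross3_sub_right,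
    cross3_smul_left, cross3_smul_right, inner_add_right, inner_sub_right, inner_smul_right,
    lagrange3]
  rw [← hqd]
  have h1 : ⟪a, cross3 a c⟫ = 0 := inner_cross3_self_left ..
  have h2 : ⟪a, cross3 a b⟫ = 0 := inner_cross3_self_left ..
  have h3 : ⟪a, cross3 a d⟫ = 0 := inner_cross3_self_left ..
  have h4 : ⟪b, cross3 a b⟫ = 0 := inner_cross3_self_right ..
  have h5 : ⟪b, cross3 b c⟫ = 0 := inner_cross3_self_left ..
  have h6 : ⟪b, cross3 a c⟫ = -⟪cross3 a b, c⟫ := by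
    simp only [inner3, cross3_apply, Matrix.cons_val_zero, Matrix.cons_val_one, Matrix.head_cons,
      Matrix.cons_val_two, Matrix.tail_cons]; ring
  have h7 : ⟪a, cross3 b c⟫ = ⟪cross3 a b, c⟫ := (triple3 ..).symm
  have h8 : ⟪b, cross3 a d⟫ = -⟪cross3 a b, d⟫ := by
    simp only [inner3, cross3_apply, Matrix.cons_val_zero, Matrix.cons_val_one, Matrix.head_cons,
      Matrix.cons_val_two, Matrix.tail_cons]; ring
  have h9 : ⟪b, a⟫ = r := by rw [hrd, real_inner_comm]
  rw [h1, h2, h3, h4, h5, h6, h7, h8, h9, ← hrd]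
  field_simp
  ring

/-! ### Differentiability of the cross product -/

def crossL : E3 →L[ℝ] E3 →L[ℝ] E3 :=
  LinearMap.toContinuousLinearMap
  { toFun := fun a => LinearMap.toContinuousLinearMap
      { toFun := fun b => cross3 a b
        map_add' := fun x y => cross3_add_right a x y
        map_smul' := fun s x => cross3_smul_right s a x }
    map_add' := by
      intro x y; apply ContinuousLinearMap.ext; intro b
      simpa using cross3_add_left x y b
    map_smul' := by
      intro s x; apply ContinuousLinearMap.ext; intro b
      simpa using cross3_smul_left s x b }

lemma crossL_apply (a b : E3) : crossL a b = cross3 a b := by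
  simp [crossL]

lemma HasDerivAt.cross3' {f g : ℝ → E3} {f' g' : E3} {x : ℝ}
    (hf : HasDerivAt f f' x) (hg : HasDerivAt g g' x) :
    HasDerivAt (fun s => cross3 (f s) (g s)) (cross3 f' (g x) + cross3 (f x) g') x := by
  have h1 : HasDerivAt (fun s => crossL (f s)) (crossL f') x :=
    crossL.hasFDerivAt.comp_hasDerivAt x hf
  have h2 := h1.clm_apply hg
  simpa only [crossL_apply] using h2

lemma Continuous.cross3' {α : Type*} [TopologicalSpace α] {f g : α → E3}
    (hf : Continuous f) (hg : Continuous g) : Continuous (fun x => cross3 (f x) (g x)) := by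
  have := (crossL.isBoundedBilinearMap.continuous).comp (hf.prodMk hg)
  simp only [crossL_apply] at this; exact this

/-! ### Partial derivatives and Clairaut's theorem -/

def pd01 (g : ℝ × ℝ → E3) : ℝ × ℝ → E3 := fun p => fderiv ℝ g p (0, 1)
def pd10 (g : ℝ × ℝ → E3) : ℝ × ℝ → E3 := fun p => fderiv ℝ g p (1, 0)

lemma contDiff_pd01 {g : ℝ × ℝ → E3} (hg : ContDiff ℝ (⊤ : ℕ∞) g) : ContDiff ℝ (⊤ : ℕ∞) (pd01 g) :=
  (hg.fderiv_right (m := (⊤ : ℕ∞)) (by simp)).clm_apply contDiff_const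

lemma contDiff_pd10 {g : ℝ × ℝ → E3} (hg : ContDiff ℝ (⊤ : ℕ∞) g) : ContDiff ℝ (⊤ : ℕ∞) (pd10 g) :=
  (hg.fderiv_right (m := (⊤ : ℕ∞)) (by simp)).clm_apply contDiff_const

lemma hasDerivAt_slice_s {g : ℝ × ℝ → E3} (hg : ContDiff ℝ (⊤ : ℕ∞) g) (t s : ℝ) :
    HasDerivAt (fun σ => g (t, σ)) (pd01 g (t, s)) s := by
  have h1 : HasDerivAt (fun σ : ℝ => ((t, σ) : ℝ × ℝ)) (((0 : ℝ), (1 : ℝ))) s :=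
    (hasDerivAt_const s t).prodMk (hasDerivAt_id s)
  exact ((hg.differentiable (by simp) (t, s)).hasFDerivAt).comp_hasDerivAt s h1

lemma hasDerivAt_slice_t {g : ℝ × ℝ → E3} (hg : ContDiff ℝ (⊤ : ℕ∞) g) (t s : ℝ) :
    HasDerivAt (fun τ => g (τ, s)) (pd10 g (t, s)) t := by
  have h1 : HasDerivAt (fun τ : ℝ => ((τ, s) : ℝ × ℝ)) (((1 : ℝ), (0 : ℝ))) t :=
    (hasDerivAt_id t).prodMk (hasDerivAt_const t s)
  exact ((hg.differentiable (by simp) (t, s)).hasFDerivAt).comp_hasDerivAt t h1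

lemma pd_comm {g : ℝ × ℝ → E3} (hg : ContDiff ℝ (⊤ : ℕ∞) g) (p : ℝ × ℝ) :
    pd10 (pd01 g) p = pd01 (pd10 g) p := by
  have hdiff : ∀ y, HasFDerivAt g (fderiv ℝ g y) y :=
    fun y => (hg.differentiable (by simp) y).hasFDerivAt
  have hfd : DifferentiableAt ℝ (fderiv ℝ g) p :=
    ((hg.fderiv_right (m := (⊤ : ℕ∞)) (by simp)).differentiable (by simp)) p
  have hsymm := second_derivative_symmetric hdiff hfd.hasFDerivAt
  have e1 : ∀ v w : ℝ × ℝ, fderiv ℝ (fun z => fderiv ℝ g z v) p w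
      = fderiv ℝ (fderiv ℝ g) p w v := by
    intro v w
    rw [fderiv_clm_apply hfd (differentiableAt_const v)]
    simp
  show fderiv ℝ (fun z => fderiv ℝ g z (0, 1)) p (1, 0)
      = fderiv ℝ (fun z => fderiv ℝ g z (1, 0)) p (0, 1)
  rw [e1, e1, hsymm (1, 0) (0, 1)]

lemma periodic_deriv_E3 {g : ℝ → E3} {L : ℝ} (hg : Function.Periodic g L) :
    Function.Periodic (deriv g) L := by
  intro s
  rw [← deriv_comp_add_const]
  congr 1
  funext x
  exact hg x
/-! ### Derived quantities of the evolving curve -/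

section Curve

variable (g : ℝ × ℝ → E3)

def c_d1 : ℝ × ℝ → E3 := pd01 g
def c_d2 : ℝ × ℝ → E3 := pd01 (c_d1 g)
def c_d3 : ℝ × ℝ → E3 := pd01 (c_d2 g)
def c_d4 : ℝ × ℝ → E3 := pd01 (c_d3 g)
def c_W : ℝ × ℝ → E3 := pd10 g
def c_q (p : ℝ × ℝ) : ℝ := ⟪c_d1 g p, c_d1 g p⟫
def c_r (p : ℝ × ℝ) : ℝ := ⟪c_d1 g p, c_d2 g p⟫
def c_e (p : ℝ × ℝ) : ℝ := ⟪c_d2 g p, c_d2 g p⟫ + ⟪c_d1 g p, c_d3 g p⟫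
def c_A (p : ℝ × ℝ) : E3 := cross3 (c_d1 g p) (c_d2 g p)
def c_Bs (p : ℝ × ℝ) : E3 :=
  (c_q g p)⁻¹ • cross3 (c_d1 g p) (c_d3 g p) - (3 * c_r g p * (c_q g p ^ 2)⁻¹) • c_A g p
def c_Bss (p : ℝ × ℝ) : E3 :=
  (c_q g p)⁻¹ • (cross3 (c_d2 g p) (c_d3 g p) + cross3 (c_d1 g p) (c_d4 g p))
    - (6 * c_r g p * (c_q g p ^ 2)⁻¹) • cross3 (c_d1 g p) (c_d3 g p)
    + (15 * c_r g p ^ 2 * (c_q g p ^ 3)⁻¹ - 3 * c_e g p * (c_q g p ^ 2)⁻¹) • c_A g p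
def c_Bt (p : ℝ × ℝ) : E3 := cross3 (c_Bs g p) (c_d2 g p) + cross3 (c_d1 g p) (c_Bss g p)
def c_F (p : ℝ × ℝ) : ℝ := ⟪c_A g p, c_A g p⟫ * Real.sqrt (c_q g p) * (c_q g p ^ 3)⁻¹
def c_G (p : ℝ × ℝ) : ℝ := -2 * ⟪c_A g p, c_d3 g p⟫ * (c_q g p ^ 3)⁻¹
def c_H (p : ℝ × ℝ) : ℝ :=
  -2 * ⟪c_A g p, c_d4 g p⟫ * (c_q g p ^ 3)⁻¹ + 12 * c_r g p * ⟪c_A g p, c_d3 g p⟫ * (c_q g p ^ 4)⁻¹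

variable {g}

lemma inner_d1_Bs (p : ℝ × ℝ) : ⟪c_d1 g p, c_Bs g p⟫ = 0 := by
  simp only [c_Bs, c_A, inner_sub_right, inner_smul_right, inner_cross3_self_left,
    mul_zero, sub_zero]

section Smooth

variable (hg : ContDiff ℝ (⊤ : ℕ∞) g)
include hg

lemma cd1_smooth : ContDiff ℝ (⊤ : ℕ∞) (c_d1 g) := contDiff_pd01 hg
lemma cd2_smooth : ContDiff ℝ (⊤ : ℕ∞) (c_d2 g) := contDiff_pd01 (cd1_smooth hg)
lemma cd3_smooth : ContDiff ℝ (⊤ : ℕ∞) (c_d3 g) := contDiff_pd01 (cd2_smooth hg)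
lemma cd4_smooth : ContDiff ℝ (⊤ : ℕ∞) (c_d4 g) := contDiff_pd01 (cd3_smooth hg)

lemma slice_d1 (t s : ℝ) : HasDerivAt (fun σ => g (t, σ)) (c_d1 g (t, s)) s :=
  hasDerivAt_slice_s hg t s
lemma slice_d2 (t s : ℝ) : HasDerivAt (fun σ => c_d1 g (t, σ)) (c_d2 g (t, s)) s :=
  hasDerivAt_slice_s (cd1_smooth hg) t s
lemma slice_d3 (t s : ℝ) : HasDerivAt (fun σ => c_d2 g (t, σ)) (c_d3 g (t, s)) s :=
  hasDerivAt_slice_s (cd2_smooth hg) t s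
lemma slice_d4 (t s : ℝ) : HasDerivAt (fun σ => c_d3 g (t, σ)) (c_d4 g (t, s)) s :=
  hasDerivAt_slice_s (cd3_smooth hg) t s

lemma hasDerivAt_q_s (t s : ℝ) :
    HasDerivAt (fun σ => c_q g (t, σ)) (2 * c_r g (t, s)) s := by
  have h := HasDerivAt.inner ℝ (slice_d2 hg t s) (slice_d2 hg t s)
  simp only [c_q, c_r]
  refine h.congr_deriv (Eq.symm ?_)
  rw [real_inner_comm (c_d2 g (t, s))]
  ring

lemma hasDerivAt_r_s (t s : ℝ) :
    HasDerivAt (fun σ => c_r g (t, σ)) (c_e g (t, s)) s := by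
  have h := HasDerivAt.inner ℝ (slice_d2 hg t s) (slice_d3 hg t s)
  simp only [c_r, c_e]
  refine h.congr_deriv (Eq.symm ?_)
  ring

lemma hasDerivAt_A_s (t s : ℝ) :
    HasDerivAt (fun σ => c_A g (t, σ)) (cross3 (c_d1 g (t, s)) (c_d3 g (t, s))) s := by
  have h := HasDerivAt.cross3' (slice_d2 hg t s) (slice_d3 hg t s)
  simp only [c_A]
  convert h using 1
  rw [cross3_self, zero_add]

end Smooth

end Curve
section LIA

variable {g : ℝ × ℝ → E3} (hg : ContDiff ℝ (⊤ : ℕ∞) g)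
  (hq : ∀ p : ℝ × ℝ, c_q g p ≠ 0)
  (hW : ∀ p : ℝ × ℝ, c_W g p = (Real.sqrt (c_q g p))⁻¹ • ((c_q g p)⁻¹ • c_A g p))
include hg hq

lemma cq_pos (p : ℝ × ℝ) : 0 < c_q g p := by
  have h : (0:ℝ) ≤ ⟪c_d1 g p, c_d1 g p⟫ := real_inner_self_nonneg
  exact lt_of_le_of_ne h (Ne.symm (hq p))

lemma sqrt_q_ne (p : ℝ × ℝ) : Real.sqrt (c_q g p) ≠ 0 := by
  rw [Real.sqrt_ne_zero']
  exact cq_pos hg hq p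

lemma hasDerivAt_sqrtq_s (t s : ℝ) :
    HasDerivAt (fun σ => Real.sqrt (c_q g (t, σ)))
      (c_r g (t, s) / Real.sqrt (c_q g (t, s))) s := by
  have h := (Real.hasDerivAt_sqrt (hq (t, s))).comp s (hasDerivAt_q_s hg t s)
  refine h.congr_deriv (Eq.symm ?_)
  field_simp

include hW

lemma hasDerivAt_W_s (t s : ℝ) :
    HasDerivAt (fun σ => c_W g (t, σ))
      ((Real.sqrt (c_q g (t, s)))⁻¹ • c_Bs g (t, s)) s := by
  have hN := (hasDerivAt_sqrtq_s hg hq t s).inv (sqrt_q_ne hg hq (t, s))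
  have hqinv := (hasDerivAt_q_s hg t s).inv (hq (t, s))
  have hcomb := hN.smul (hqinv.smul (hasDerivAt_A_s hg t s))
  rw [show (fun σ => c_W g (t, σ))
      = fun σ => (Real.sqrt (c_q g (t, σ)))⁻¹ • ((c_q g (t, σ))⁻¹ • c_A g (t, σ))
      from funext fun σ => hW (t, σ)]
  refine hcomb.congr_deriv (Eq.symm ?_)
  simp only [Pi.inv_apply, Pi.pow_apply, Pi.smul_apply, Pi.smul_apply', Pi.sub_apply, Pi.mul_apply, Nat.cast_ofNat, Nat.reduceSub] at *
  have hqpos := cq_pos hg hq (t, s)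
  set N := Real.sqrt (c_q g (t, s)) with hNdef
  have hN0 : N ≠ 0 := sqrt_q_ne hg hq (t, s)
  have hqN : c_q g (t, s) = N ^ 2 := (Real.sq_sqrt hqpos.le).symm
  simp only [c_Bs]
  rw [hqN]
  match_scalars <;> field_simp <;> ring

lemma hasDerivAt_Bsf_s (t s : ℝ) :
    HasDerivAt (fun σ => (Real.sqrt (c_q g (t, σ)))⁻¹ • c_Bs g (t, σ))
      ((Real.sqrt (c_q g (t, s)))⁻¹ • c_Bss g (t, s)) s := by
  have hN := (hasDerivAt_sqrtq_s hg hq t s).inv (sqrt_q_ne hg hq (t, s))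
  have hqinv := (hasDerivAt_q_s hg t s).inv (hq (t, s))
  have hC13 := HasDerivAt.cross3' (slice_d2 hg t s) (slice_d4 hg t s)
  have hq2inv := ((hasDerivAt_q_s hg t s).pow 2).inv (pow_ne_zero 2 (hq (t, s)))
  have hcoef := ((hasDerivAt_r_s hg t s).const_mul 3).mul hq2inv
  have hBs := (hqinv.smul hC13).sub (hcoef.smul (hasDerivAt_A_s hg t s))
  have hcomb := hN.smul hBs
  refine hcomb.congr_deriv (Eq.symm ?_)
  simp only [Pi.inv_apply, Pi.pow_apply, Pi.smul_apply, Pi.smul_apply', Pi.sub_apply, Pi.mul_apply, Nat.cast_ofNat, Nat.reduceSub] at *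
  have hqpos := cq_pos hg hq (t, s)
  set N := Real.sqrt (c_q g (t, s)) with hNdef
  have hN0 : N ≠ 0 := sqrt_q_ne hg hq (t, s)
  have hqN : c_q g (t, s) = N ^ 2 := (Real.sq_sqrt hqpos.le).symm
  simp only [c_Bss, c_Bs]
  rw [hqN]
  match_scalars <;> field_simp <;> ring

lemma hasDerivAt_d1_t (t s : ℝ) :
    HasDerivAt (fun τ => c_d1 g (τ, s))
      ((Real.sqrt (c_q g (t, s)))⁻¹ • c_Bs g (t, s)) t := by
  have h := hasDerivAt_slice_t (contDiff_pd01 hg) t s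
  have e : pd10 (pd01 g) (t, s) = (Real.sqrt (c_q g (t, s)))⁻¹ • c_Bs g (t, s) := by
    rw [pd_comm hg]
    exact (hasDerivAt_slice_s (contDiff_pd10 hg) t s).unique (hasDerivAt_W_s hg hq hW t s)
  rwa [e] at h

lemma hasDerivAt_d2_t (t s : ℝ) :
    HasDerivAt (fun τ => c_d2 g (τ, s))
      ((Real.sqrt (c_q g (t, s)))⁻¹ • c_Bss g (t, s)) t := by
  have h := hasDerivAt_slice_t (contDiff_pd01 (contDiff_pd01 hg)) t s
  have e : pd10 (pd01 (pd01 g)) (t, s)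
      = (Real.sqrt (c_q g (t, s)))⁻¹ • c_Bss g (t, s) := by
    rw [pd_comm (contDiff_pd01 hg)]
    have e2 : pd10 (pd01 g) = pd01 (pd10 g) := funext (pd_comm hg)
    rw [e2]
    have e3 : (fun σ => pd01 (pd10 g) (t, σ))
        = fun σ => (Real.sqrt (c_q g (t, σ)))⁻¹ • c_Bs g (t, σ) :=
      funext fun σ =>
        (hasDerivAt_slice_s (contDiff_pd10 hg) t σ).unique (hasDerivAt_W_s hg hq hW t σ)
    have h4 := hasDerivAt_slice_s (contDiff_pd01 (contDiff_pd10 hg)) t s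
    rw [e3] at h4
    exact h4.unique (hasDerivAt_Bsf_s hg hq hW t s)
  rwa [e] at h

lemma hasDerivAt_q_t (t s : ℝ) :
    HasDerivAt (fun τ => c_q g (τ, s)) 0 t := by
  have h := HasDerivAt.inner ℝ (hasDerivAt_d1_t hg hq hW t s) (hasDerivAt_d1_t hg hq hW t s)
  simp only [c_q]
  refine h.congr_deriv (Eq.symm ?_)
  have hcomm : ⟪c_Bs g (t, s), c_d1 g (t, s)⟫ = ⟪c_d1 g (t, s), c_Bs g (t, s)⟫ :=
    real_inner_comm _ _
  rw [real_inner_smul_right, real_inner_smul_left, inner_d1_Bs, hcomm, inner_d1_Bs]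
  ring

lemma hasDerivAt_sqrtq_t (t s : ℝ) :
    HasDerivAt (fun τ => Real.sqrt (c_q g (τ, s))) 0 t := by
  have h := (Real.hasDerivAt_sqrt (hq (t, s))).comp t (hasDerivAt_q_t hg hq hW t s)
  refine h.congr_deriv (Eq.symm ?_)
  simp

lemma hasDerivAt_A_t (t s : ℝ) :
    HasDerivAt (fun τ => c_A g (τ, s))
      ((Real.sqrt (c_q g (t, s)))⁻¹ • c_Bt g (t, s)) t := by
  have h := HasDerivAt.cross3' (hasDerivAt_d1_t hg hq hW t s) (hasDerivAt_d2_t hg hq hW t s)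
  simp only [c_A]
  convert h using 1
  simp only [c_Bt, cross3_smul_left, cross3_smul_right, smul_add]

lemma hasDerivAt_F_t (t s : ℝ) :
    HasDerivAt (fun τ => c_F g (τ, s)) (c_H g (t, s)) t := by
  have hAt := hasDerivAt_A_t hg hq hW t s
  have hAA := HasDerivAt.inner ℝ hAt hAt
  have hq3 := ((hasDerivAt_q_t hg hq hW t s).pow 3).inv (pow_ne_zero 3 (hq (t, s)))
  have hprod := (hAA.mul (hasDerivAt_sqrtq_t hg hq hW t s)).mul hq3
  simp only [c_F]
  refine hprod.congr_deriv (Eq.symm ?_)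
  simp only [Pi.inv_apply, Pi.pow_apply, Pi.smul_apply, Pi.smul_apply', Pi.sub_apply, Pi.mul_apply, Nat.cast_ofNat, Nat.reduceSub] at *
  have KI := key_identity (c_d1 g (t, s)) (c_d2 g (t, s)) (c_d3 g (t, s)) (c_d4 g (t, s))
    (hq (t, s)) rfl rfl rfl
  have hN0 : Real.sqrt (c_q g (t, s)) ≠ 0 := sqrt_q_ne hg hq (t, s)
  have hqpos := cq_pos hg hq (t, s)
  have hqN : Real.sqrt (c_q g (t, s)) * Real.sqrt (c_q g (t, s)) = c_q g (t, s) :=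
    Real.mul_self_sqrt hqpos.le
  rw [real_inner_smul_right, real_inner_smul_left]
  have hcomm : ⟪c_Bt g (t, s), c_A g (t, s)⟫ = ⟪c_A g (t, s), c_Bt g (t, s)⟫ :=
    real_inner_comm _ _
  rw [hcomm]
  simp only [mul_zero, neg_zero, zero_div, add_zero]
  have h5 : (((Real.sqrt (c_q g (t, s)))⁻¹ * ⟪c_A g (t, s), c_Bt g (t, s)⟫
      + (Real.sqrt (c_q g (t, s)))⁻¹ * ⟪c_A g (t, s), c_Bt g (t, s)⟫) * Real.sqrt (c_q g (t, s)))
      * (c_q g (t, s) ^ 3)⁻¹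
      = 2 * ⟪c_A g (t, s), c_Bt g (t, s)⟫ * (c_q g (t, s) ^ 3)⁻¹ := by
    field_simp
    ring
  rw [h5]
  simp only [c_H, c_A, c_Bt, c_Bs, c_Bss, c_q, c_r, c_e] at KI ⊢
  exact KI.symm

end LIA
section More

variable {g : ℝ × ℝ → E3} (hg : ContDiff ℝ (⊤ : ℕ∞) g) (hq : ∀ p : ℝ × ℝ, c_q g p ≠ 0)
include hg hq

lemma hasDerivAt_G_s (t s : ℝ) :
    HasDerivAt (fun σ => c_G g (t, σ)) (c_H g (t, s)) s := by
  have hi := HasDerivAt.inner ℝ (hasDerivAt_A_s hg t s) (slice_d4 hg t s)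
  have hq3inv := ((hasDerivAt_q_s hg t s).pow 3).inv (pow_ne_zero 3 (hq (t, s)))
  have h := (hi.const_mul (-2)).mul hq3inv
  simp only [c_G]
  refine h.congr_deriv (Eq.symm ?_)
  simp only [Pi.inv_apply, Pi.pow_apply, Pi.smul_apply, Pi.smul_apply', Pi.sub_apply, Pi.mul_apply, Nat.cast_ofNat, Nat.reduceSub] at *
  have hz : ⟪cross3 (c_d1 g (t, s)) (c_d3 g (t, s)), c_d3 g (t, s)⟫ = 0 :=
    inner_cross3_right_self _ _
  rw [hz, add_zero]
  simp only [c_H]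
  have hqne := hq (t, s)
  field_simp
  ring

lemma cont_H : Continuous (c_H g) := by
  have h1 := (cd1_smooth hg).continuous
  have h2 := (cd2_smooth hg).continuous
  have h3 := (cd3_smooth hg).continuous
  have h4 := (cd4_smooth hg).continuous
  have hA : Continuous (c_A g) := h1.cross3' h2
  have hqc : Continuous (c_q g) := h1.inner h1
  have hrc : Continuous (c_r g) := h1.inner h2
  unfold c_H
  apply Continuous.add
  · exact (continuous_const.mul (hA.inner h4)).mul
      ((hqc.pow 3).inv₀ fun p => pow_ne_zero _ (hq p))
  · exact ((continuous_const.mul hrc).mul (hA.inner h3)).mul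
      ((hqc.pow 4).inv₀ fun p => pow_ne_zero _ (hq p))

lemma cont_F : Continuous (c_F g) := by
  have h1 := (cd1_smooth hg).continuous
  have h2 := (cd2_smooth hg).continuous
  have hA : Continuous (c_A g) := h1.cross3' h2
  have hqc : Continuous (c_q g) := h1.inner h1
  unfold c_F
  exact ((hA.inner hA).mul (Real.continuous_sqrt.comp hqc)).mul
    ((hqc.pow 3).inv₀ fun p => pow_ne_zero _ (hq p))

end More
/-- Under the LIA evolution `∂X/∂t = c b`, the total squared curvature `∮ c² ds` of a closed
curve is conserved in time. -/
theorem LIA_squared_curvature_conserved (X : ℝ → ℝ → E3) (L : ℝ) (hL : 0 < L)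
    (hsm : ContDiff ℝ (⊤ : ℕ∞) fun p : ℝ × ℝ => X p.1 p.2)
    (hper : ∀ t : ℝ, Function.Periodic (X t) L)
    (hreg : ∀ t s : ℝ, deriv (X t) s ≠ 0)
    (hcurv : ∀ t s : ℝ, curv (X t) s ≠ 0)
    (hLIA : ∀ t s : ℝ, deriv (fun τ => X τ s) t = curv (X t) s • binormal3 (X t) s) :
    ∀ t₁ t₂ : ℝ,
      (∫ s in (0:ℝ)..L, curv (X t₁) s ^ 2 * ‖deriv (X t₁) s‖) =
        ∫ s in (0:ℝ)..L, curv (X t₂) s ^ 2 * ‖deriv (X t₂) s‖ := by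
  intro t₁ t₂
  set g : ℝ × ℝ → E3 := fun p : ℝ × ℝ => X p.1 p.2 with hgdef
  have hsm' : ContDiff ℝ (⊤ : ℕ∞) g := hsm
  -- identification of slice derivatives
  have hder1 : ∀ t s, deriv (X t) s = c_d1 g (t, s) := fun t s => (slice_d1 hsm' t s).deriv
  have hder2 : ∀ t s, deriv (deriv (X t)) s = c_d2 g (t, s) := by
    intro t s
    have e : deriv (X t) = fun σ => c_d1 g (t, σ) := funext fun σ => hder1 t σ
    rw [e]
    exact (slice_d2 hsm' t s).deriv
  have hreg' : ∀ p : ℝ × ℝ, c_d1 g p ≠ 0 := by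
    rintro ⟨t, s⟩
    have h := hreg t s
    rwa [hder1] at h
  have hq' : ∀ p : ℝ × ℝ, c_q g p ≠ 0 := fun p => by
    simp only [c_q]
    exact inner_self_ne_zero.mpr (hreg' p)
  have hd1norm : ∀ t s : ℝ, ‖c_d1 g (t, s)‖ = Real.sqrt (c_q g (t, s)) := fun t s => by
    simp only [c_q]
    exact norm_eq_sqrt_real_inner _
  -- the LIA equation in terms of the derived quantities
  have hW' : ∀ p : ℝ × ℝ, c_W g p = (Real.sqrt (c_q g p))⁻¹ • ((c_q g p)⁻¹ • c_A g p) := by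
    rintro ⟨t, s⟩
    have h0 : c_W g (t, s) = deriv (fun τ => X τ s) t :=
      ((hasDerivAt_slice_t hsm' t s).deriv).symm
    rw [h0, hLIA t s]
    have hA0 : cross3 (deriv (X t) s) (deriv (deriv (X t)) s) = c_A g (t, s) := by
      rw [hder1, hder2]; rfl
    have hAne : ‖cross3 (deriv (X t) s) (deriv (deriv (X t)) s)‖ ≠ 0 := by
      intro h
      apply hcurv t s
      unfold curv
      rw [h, zero_div]
    have hnne : ‖deriv (X t) s‖ ≠ 0 := by
      rw [norm_ne_zero_iff]
      exact hreg t s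
    unfold curv binormal3
    rw [smul_smul, hA0, smul_smul]
    congr 1
    rw [hA0] at hAne
    rw [hder1] at hnne ⊢
    rw [hd1norm] at hnne ⊢
    have hqpos : (0 : ℝ) < c_q g (t, s) := by
      have h := real_inner_self_nonneg (x := c_d1 g (t, s))
      have : (⟪c_d1 g (t, s), c_d1 g (t, s)⟫ : ℝ) ≠ 0 := by
        simpa [c_q] using hq' (t, s)
      exact lt_of_le_of_ne h (Ne.symm (by simpa [c_q] using this))
    have h3 : (Real.sqrt (c_q g (t, s))) ^ 3 = c_q g (t, s) * Real.sqrt (c_q g (t, s)) := by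
      rw [pow_succ, Real.sq_sqrt hqpos.le]
    rw [h3]
    field_simp
  -- the integrand in terms of the derived quantities
  have hF' : ∀ t s : ℝ, curv (X t) s ^ 2 * ‖deriv (X t) s‖ = c_F g (t, s) := by
    intro t s
    unfold curv
    simp only [c_F]
    rw [hder1, hder2]
    have hnne : ‖c_d1 g (t, s)‖ ≠ 0 := norm_ne_zero_iff.mpr (hreg' (t, s))
    have hqn : c_q g (t, s) = ‖c_d1 g (t, s)‖ ^ 2 := by
      simp only [c_q]; exact real_inner_self_eq_norm_sq _
    have hAA : (⟪c_A g (t, s), c_A g (t, s)⟫ : ℝ) = ‖c_A g (t, s)‖ ^ 2 :=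
      real_inner_self_eq_norm_sq _
    rw [hqn, hAA, Real.sqrt_sq (norm_nonneg _)]
    simp only [c_A]
    field_simp
  -- periodicity in s of the derived quantities
  have hp1 : ∀ t : ℝ, Function.Periodic (fun σ => c_d1 g (t, σ)) L := by
    intro t
    have e : (fun σ => c_d1 g (t, σ)) = deriv (X t) := funext fun σ => (hder1 t σ).symm
    rw [e]
    exact periodic_deriv_E3 (hper t)
  have hp2 : ∀ t : ℝ, Function.Periodic (fun σ => c_d2 g (t, σ)) L := by
    intro t
    have e : (fun σ => c_d2 g (t, σ)) = deriv (fun σ => c_d1 g (t, σ)) :=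
      funext fun σ => ((slice_d2 hsm' t σ).deriv).symm
    rw [e]
    exact periodic_deriv_E3 (hp1 t)
  have hp3 : ∀ t : ℝ, Function.Periodic (fun σ => c_d3 g (t, σ)) L := by
    intro t
    have e : (fun σ => c_d3 g (t, σ)) = deriv (fun σ => c_d2 g (t, σ)) :=
      funext fun σ => ((slice_d3 hsm' t σ).deriv).symm
    rw [e]
    exact periodic_deriv_E3 (hp2 t)
  have hGL : ∀ t : ℝ, c_G g (t, L) = c_G g (t, 0) := by
    intro t
    have e0 : c_G g (t, L) = c_G g (t, 0 + L) := by rw [zero_add]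
    rw [e0]
    simp only [c_G, c_A, c_q]
    have e1 : c_d1 g (t, 0 + L) = c_d1 g (t, 0) := hp1 t 0
    have e2 : c_d2 g (t, 0 + L) = c_d2 g (t, 0) := hp2 t 0
    have e3 : c_d3 g (t, 0 + L) = c_d3 g (t, 0) := hp3 t 0
    rw [e1, e2, e3]
  -- continuity
  have hHc : Continuous (c_H g) := cont_H hsm' hq'
  have hFc : Continuous (c_F g) := cont_F hsm' hq'
  -- the energy has zero derivative everywhere
  have hE : ∀ t₀ : ℝ, HasDerivAt (fun t => ∫ s in (0:ℝ)..L, c_F g (t, s)) 0 t₀ := by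
    intro t₀
    have hK : IsCompact ((Set.Icc (t₀ - 1) (t₀ + 1)) ×ˢ (Set.uIcc (0:ℝ) L)) :=
      isCompact_Icc.prod isCompact_uIcc
    obtain ⟨M, hM⟩ := hK.exists_bound_of_continuousOn hHc.continuousOn
    have hball : Metric.ball t₀ 1 ⊆ Set.Icc (t₀ - 1) (t₀ + 1) := by
      rw [Real.ball_eq_Ioo]
      exact Set.Ioo_subset_Icc_self
    have hder := intervalIntegral.hasDerivAt_integral_of_dominated_loc_of_deriv_le
      (F := fun t s => c_F g (t, s)) (F' := fun t s => c_H g (t, s))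
      (bound := fun _ => M) (a := (0:ℝ)) (b := L) (x₀ := t₀) (s := Metric.ball t₀ 1) (μ := MeasureTheory.volume) (Metric.ball_mem_nhds t₀ one_pos)
      (Filter.Eventually.of_forall fun x =>
        ((hFc.comp (Continuous.prodMk_right x)).aestronglyMeasurable))
      ((hFc.comp (Continuous.prodMk_right t₀)).intervalIntegrable 0 L)
      ((hHc.comp (Continuous.prodMk_right t₀)).aestronglyMeasurable)
      (MeasureTheory.ae_of_all _ fun s hs x hx => by
        have hmem : (x, s) ∈ (Set.Icc (t₀ - 1) (t₀ + 1)) ×ˢ (Set.uIcc (0:ℝ) L) :=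
          ⟨hball hx, Set.Ioc_subset_Icc_self hs⟩
        exact hM (x, s) hmem)
      intervalIntegrable_const
      (MeasureTheory.ae_of_all _ fun s hs x hx => hasDerivAt_F_t hsm' hq' hW' x s)
    have hint : (∫ s in (0:ℝ)..L, c_H g (t₀, s)) = 0 := by
      rw [intervalIntegral.integral_eq_sub_of_hasDerivAt (f := fun σ => c_G g (t₀, σ))
        (fun s _ => hasDerivAt_G_s hsm' hq' t₀ s)
        ((hHc.comp (Continuous.prodMk_right t₀)).intervalIntegrable 0 L)]
      rw [hGL t₀, sub_self]
    have h2 := hder.2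
    rwa [hint] at h2
  -- conclude
  have h1 : (∫ s in (0:ℝ)..L, curv (X t₁) s ^ 2 * ‖deriv (X t₁) s‖)
      = ∫ s in (0:ℝ)..L, c_F g (t₁, s) := by
    simp only [hF']
  have h2 : (∫ s in (0:ℝ)..L, curv (X t₂) s ^ 2 * ‖deriv (X t₂) s‖)
      = ∫ s in (0:ℝ)..L, c_F g (t₂, s) := by
    simp only [hF']
  rw [h1, h2]
  exact is_const_of_deriv_eq_zero (fun t => (hE t).differentiableAt)
    (fun t => (hE t).deriv) t₁ t₂
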